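/- Let m be a familial monad on c ⥤ Type (familial and cartesian). For each object C of c let η(C) ∈ m(1)(C) denote the unit operation (the image of the unique element under the unit component at the terminal copresheaf), so that the arity m[η(C)] is isomorphic to the representable copresheaf at C; for z ∈ m[M](C') write the inert morphism η(C') ⟶ M in Θ_m induced by z. Then a presheaf P : Θ_mᵒᵖ ⥤ Type is isomorphic to the nerve N_m(X) of some m-algebra X if and only if P satisfies the Segal condition: for every object M of Θ_m, the canonical map from P(M) to the limit, over the category of elements of the arity m[M] (objects: pairs (C', z ∈ m[M](C'))), of the diagram (C', z) ↦ P(η(C')) with transition maps induced by the corresponding morphisms between unit operations, is a bijection. -/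

import Mathlib

/-!
Write `X_P` for the copresheaf `C ↦ P(η(C))`. Through the isomorphisms `m[η(C)] ≅ c(C, −)`,
families over the elements of `m[M]` are the same as maps `m[M] ⟶ X_P`, so the Segal condition
says that `q ↦ (z ↦ P(inert z) q)` is a bijection `P(M) ≃ Hom(m[M], X_P)`.

For a nerve this bijection is the free–forgetful adjunction `Hom(Free m[M], X) ≃ Hom(m[M], X)`
followed by the Yoneda isomorphism `X_{N X} ≅ X`, and the Segal condition is invariant under
isomorphism of presheaves.

Conversely, let `P` be Segal. By familiality every element of `m(X_P)(C)` has the form `m(g)(e)`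
with `g : m[M] ⟶ X_P` and `e ∈ m(m[M])(C)`, and `e` classifies a Kleisli map, i.e. a morphism
`η(C) ⟶ M` of `Θ_m`. Sending `m(g)(e)` to the image under `P(e)` of the element of `P(M)`
corresponding to `g` gives a structure map `m(X_P) ⟶ X_P`.
The unit law is the case `e = η`, and associativity reduces to Kleisli composition once every
element of `m²(X_P)` is lifted to some `m²(m[M])`, which the cartesian square of `μ` at
`g : m[M] ⟶ X_P` provides. Every morphism of `Θ_m` is a Kleisli map, so the Segal bijections
assemble into an isomorphism from `P` to the nerve of this algebra.
-/

namespace CategoryTheory.Monad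

variable {D : Type*} [Category D] (T : Monad D)

def liftFree (Y : T.Algebra) {A : D} (k : A ⟶ Y.A) : T.free.obj A ⟶ Y where
  f := T.map k ≫ Y.a
  h := by
    show T.map (T.map k ≫ Y.a) ≫ Y.a = T.μ.app A ≫ T.map k ≫ Y.a
    rw [Functor.map_comp, Category.assoc, ← Y.assoc, ← NatTrans.naturality_assoc T.μ k]
    rfl

variable {T}

lemma liftFree_f (Y : T.Algebra) {A : D} (k : A ⟶ Y.A) : (T.liftFree Y k).f = T.map k ≫ Y.a :=
  rfl

lemma eta_comp_liftFree_f (Y : T.Algebra) {A : D} (k : A ⟶ Y.A) :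
    T.η.app A ≫ (T.liftFree Y k).f = k := by
  rw [liftFree_f, ← Category.assoc, ← T.η.naturality k, Category.assoc, Y.unit]
  exact Category.comp_id k

lemma liftFree_eta_comp_f {Y : T.Algebra} {A : D} (u : T.free.obj A ⟶ Y) :
    T.liftFree Y (T.η.app A ≫ u.f) = u := by
  ext
  erw [liftFree_f, T.map_comp, Category.assoc, u.h, ← Category.assoc]
  have h : T.map (T.η.app A) ≫ (T.free.obj A).a = 𝟙 _ := T.right_unit A
  erw [h, Category.id_comp]

lemma liftFree_eta (A : D) : T.liftFree (T.free.obj A) (T.η.app A) = 𝟙 _ :=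
  (congrArg _ (Category.comp_id _).symm).trans (liftFree_eta_comp_f (𝟙 (T.free.obj A)))

lemma free_map_comp_liftFree (Y : T.Algebra) {A B : D} (j : A ⟶ B) (k : B ⟶ Y.A) :
    T.free.map j ≫ T.liftFree Y k = T.liftFree Y (j ≫ k) := by
  ext
  exact (Category.assoc _ _ _).symm.trans (congrArg (· ≫ Y.a) (T.map_comp j k).symm)

lemma liftFree_comp {Y Z : T.Algebra} {A : D} (k : A ⟶ Y.A) (v : Y ⟶ Z) :
    T.liftFree Y k ≫ v = T.liftFree Z (k ≫ v.f) := by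
  ext
  show (T.map k ≫ Y.a) ≫ v.f = T.map (k ≫ v.f) ≫ Z.a
  rw [Category.assoc, ← v.h, T.map_comp, Category.assoc]

lemma eta_comp_free_map_comp_f {Y : T.Algebra} {A B : D} (j : A ⟶ B) (v : T.free.obj B ⟶ Y) :
    T.η.app A ≫ (T.free.map j ≫ v).f = j ≫ T.η.app B ≫ v.f :=
  (T.η.naturality_assoc j v.f).symm

def liftFreeEquiv (Y : T.Algebra) (A : D) : (A ⟶ Y.A) ≃ (T.free.obj A ⟶ Y) where
  toFun := T.liftFree Y
  invFun u := T.η.app A ≫ u.f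
  left_inv := eta_comp_liftFree_f Y
  right_inv := liftFree_eta_comp_f

end CategoryTheory.Monad

namespace CategoryTheory

lemma coyonedaEquiv_symm_comp {C : Type*} [Category C] {X : C} {F G : C ⥤ Type _}
    (x : F.obj X) (t : F ⟶ G) :
    coyonedaEquiv.symm x ≫ t = coyonedaEquiv.symm (t.app X x) :=
  coyonedaEquiv.injective (by
    rw [coyonedaEquiv_comp, Equiv.apply_symm_apply, Equiv.apply_symm_apply])

lemma coyonedaEquiv_symm_eq_of_iso {C : Type*} [Category C] {X Y : C} {F : C ⥤ Type _}
    (ρ : F ≅ coyoneda.obj (Opposite.op X)) (z : F.obj Y) :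
    coyonedaEquiv.symm z = coyoneda.map (ρ.hom.app Y z).op ≫ ρ.inv := by
  rw [Equiv.symm_apply_eq, coyonedaEquiv_comp, coyonedaEquiv_coyoneda_map,
    Iso.hom_inv_id_app_apply]

end CategoryTheory

namespace Fam
open CategoryTheory Opposite Limits
private lemma sigmaExt {α : Type} {β : α → Type} {a a' : α} {b : β a} {b' : β a'}
    (h : a = a') (h' : HEq b b') : (⟨a, b⟩ : Σ x, β x) = ⟨a', b'⟩ := by
  subst h; cases h'; rfl
variable {c d : Type} [SmallCategory c] [SmallCategory d]
def elHom (pos : c ⥤ Type) {C C' : c} (f : C ⟶ C') (I : pos.obj C) :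
    pos.elementsMk C I ⟶ pos.elementsMk C' (pos.map f I) :=
  CategoryOfElements.homMk _ _ f rfl
lemma eqToHom_val {pos : c ⥤ Type} {x y : pos.Elements} (E : x = y) :
    (eqToHom E).val = eqToHom (congrArg Sigma.fst E) := by
  subst E; simp
@[simps]
def famApply (pos : c ⥤ Type) (ar : pos.Elementsᵒᵖ ⥤ d ⥤ Type) :
    (d ⥤ Type) ⥤ c ⥤ Type where
  obj X :=
    { obj := fun C => Σ I : pos.obj C, ar.obj (op (pos.elementsMk C I)) ⟶ X
      map := fun {C C'} f => TypeCat.ofHom fun x => ⟨pos.map f x.1, ar.map (elHom pos f x.1).op ≫ x.2⟩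
      map_id := by
        intro C
        apply ConcreteCategory.hom_ext
        intro x
        obtain ⟨I, g⟩ := x
        have h : pos.map (𝟙 C) I = I := by simp
        have hE : pos.elementsMk C I = pos.elementsMk C (pos.map (𝟙 C) I) := by rw [h]
        have he : elHom pos (𝟙 C) I = eqToHom hE := by
          apply CategoryOfElements.ext
          rw [eqToHom_val]
          simp [elHom]
        dsimp
        refine sigmaExt h ?_
        rw [he]
        simp [eqToHom_op, eqToHom_map]
      map_comp := by
        intro C C' C'' f g
        apply ConcreteCategory.hom_ext
        intro x
        obtain ⟨I, u⟩ := x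
        have h : pos.map (f ≫ g) I = pos.map g (pos.map f I) := by simp
        have hE : pos.elementsMk C'' (pos.map (f ≫ g) I)
            = pos.elementsMk C'' (pos.map g (pos.map f I)) := by rw [h]
        have hcomp : elHom pos f I ≫ elHom pos g (pos.map f I)
            = elHom pos (f ≫ g) I ≫ eqToHom hE := by
          apply CategoryOfElements.ext
          rw [CategoryOfElements.comp_val, CategoryOfElements.comp_val, eqToHom_val]
          simp [elHom]
        dsimp
        refine sigmaExt h ?_
        rw [← Category.assoc, ← ar.map_comp, ← op_comp, hcomp, op_comp, ar.map_comp,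
          Category.assoc]
        simp [eqToHom_op, eqToHom_map] }
  map {X Y} t :=
    { app := fun C => TypeCat.ofHom fun x => ⟨x.1, x.2 ≫ t⟩
      naturality := by
        intro C C' f
        apply ConcreteCategory.hom_ext
        intro x
        dsimp
        rw [Category.assoc] }
  map_id := by
    intro X
    apply NatTrans.ext
    funext C
    apply ConcreteCategory.hom_ext
    intro x
    dsimp
    rw [Category.comp_id]
  map_comp := by
    intro X Y Z s t
    apply NatTrans.ext
    funext C
    apply ConcreteCategory.hom_ext
    intro x
    dsimp
    rw [Category.assoc]

/-- The unit exhibiting `famApply pos (ar ⋙ G)` as the right coclosure `⌈F/G⌉`,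
i.e. the left Kan extension of the familial functor `F = famApply pos ar` along `G`. -/
def coclosureUnit {e : Type} [SmallCategory e] (pos : c ⥤ Type)
    (ar : pos.Elementsᵒᵖ ⥤ e ⥤ Type) (G : (e ⥤ Type) ⥤ d ⥤ Type) :
    famApply pos ar ⟶ G ⋙ famApply pos (ar ⋙ G) where
  app X :=
    { app := fun C => TypeCat.ofHom fun x => ⟨x.1, G.map x.2⟩
      naturality := by
        intro C C' f
        apply ConcreteCategory.hom_ext
        intro x
        show (⟨pos.map f x.1, G.map (ar.map (elHom pos f x.1).op ≫ x.2)⟩ :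
            Σ I : pos.obj C', (ar ⋙ G).obj (op (pos.elementsMk C' I)) ⟶ G.obj X)
          = ⟨pos.map f x.1, G.map (ar.map (elHom pos f x.1).op) ≫ G.map x.2⟩
        rw [G.map_comp] }
  naturality := by
    intro X Y t
    apply NatTrans.ext
    funext C
    apply ConcreteCategory.hom_ext
    intro x
    show (⟨x.1, G.map (x.2 ≫ t)⟩ :
        Σ I : pos.obj C, (ar ⋙ G).obj (op (pos.elementsMk C I)) ⟶ G.obj Y)
      = ⟨x.1, G.map x.2 ≫ G.map t⟩
    rw [G.map_comp]

section Statement6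

variable {c : Type} [SmallCategory c]
  (m : Monad (c ⥤ Type)) {posm : c ⥤ Type} (arm : posm.Elementsᵒᵖ ⥤ c ⥤ Type)

/-- The free `m`-algebra on the arity of the operation `M`. -/
def theoryObj (M : posm.Elements) : m.Algebra :=
  m.free.obj (arm.obj (op M))

/-- The theory category `Θ_m`. -/
def Theta : Type :=
  InducedCategory m.Algebra (theoryObj m arm)

instance : Category (Theta m arm) :=
  InducedCategory.instCategory (F := theoryObj m arm)

/-- An operation, regarded as an object of `Θ_m`. -/
def toTheta (M : posm.Elements) : Theta m arm := M

/-- The inclusion `Θ_m ⥤ m-Alg`. -/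
def thetaIncl : Theta m arm ⥤ m.Algebra :=
  inducedFunctor (theoryObj m arm)

/-- The nerve functor `N_m : m-Alg ⥤ (Θ_mᵒᵖ ⥤ Type)` (restricted Yoneda). -/
def nerveFunctor : m.Algebra ⥤ ((Theta m arm)ᵒᵖ ⥤ Type) :=
  yoneda ⋙ (Functor.whiskeringLeft (Theta m arm)ᵒᵖ m.Algebraᵒᵖ Type).obj (thetaIncl m arm).op

/-- The terminal copresheaf on `c`. -/
def termPSh : c ⥤ Type := (Functor.const c).obj PUnit

variable (em : famApply posm arm ≅ (m : (c ⥤ Type) ⥤ c ⥤ Type))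

/-- The unit operation `η(C) ∈ m(1)(C)`: the image of the unique element under the unit
component of `m` at the terminal copresheaf. -/
def unitOp (C : c) : posm.obj C :=
  ((em.inv.app (termPSh)).app C ((m.η.app (termPSh)).app C PUnit.unit)).1

/-- The unit operation at `C`, as an object of `Θ_m`. -/
def unitObj (C : c) : Theta m arm :=
  posm.elementsMk C (unitOp m arm em C)

variable (ρ : ∀ C : c,
  arm.obj (op (posm.elementsMk C (unitOp m arm em C))) ≅ coyoneda.obj (op C))

/-- The inert morphism `η(C') ⟶ M` of `Θ_m` induced by an element `z ∈ m[M](C')`: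
the free-algebra morphism on the composite `m[η(C')] ≅ c(C',−) ⟶ m[M]` classified
by `z` via the (co)Yoneda lemma. -/
def inert (M : posm.Elements) {C' : c} (z : (arm.obj (op M)).obj C') :
    unitObj m arm em C' ⟶ toTheta m arm M :=
  InducedCategory.homMk (m.free.map ((ρ C').hom ≫ coyonedaEquiv.symm z))

/-- The morphism between unit operations of `Θ_m` corresponding to a morphism in the
category of elements of the arity `m[M]`. -/
def unitTrans {M : posm.Elements} {z₁ z₂ : (arm.obj (op M)).Elements} (φ : z₁ ⟶ z₂) :
    unitObj m arm em z₂.1 ⟶ unitObj m arm em z₁.1 :=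
  InducedCategory.homMk (m.free.map ((ρ z₂.1).hom ≫ coyoneda.map φ.val.op ≫ (ρ z₁.1).inv))

lemma unitTrans_comp_inert {M : posm.Elements} {z₁ z₂ : (arm.obj (op M)).Elements}
    (φ : z₁ ⟶ z₂) :
    unitTrans m arm em ρ φ ≫ inert m arm em ρ M z₁.2 = inert m arm em ρ M z₂.2 := by
  have key : coyoneda.map φ.val.op ≫ coyonedaEquiv.symm z₁.2
      = coyonedaEquiv.symm z₂.2 := by
    apply coyonedaEquiv.injective
    rw [← coyonedaEquiv_naturality, Equiv.apply_symm_apply, Equiv.apply_symm_apply]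
    exact φ.2
  apply InducedCategory.hom_ext
  show m.free.map _ ≫ m.free.map _ = m.free.map _
  rw [← m.free.map_comp]
  congr 1
  exact (Category.assoc _ _ _).trans (whisker_eq _ ((Category.assoc _ _ _).trans
    ((whisker_eq _ (Iso.inv_hom_id_assoc _ _)).trans key)))

/-- The set of matching families for the Segal condition at the operation `M`:
families of elements of `P` at the unit operations, indexed by the category of elements of
the arity `m[M]`, compatible with the transition maps induced by the morphisms between
unit operations. -/
def segalFamilies (P : (Theta m arm)ᵒᵖ ⥤ Type) (M : posm.Elements) : Type :=
  { s : ∀ z : (arm.obj (op M)).Elements, P.obj (op (unitObj m arm em z.1)) //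
    ∀ {z₁ z₂ : (arm.obj (op M)).Elements} (φ : z₁ ⟶ z₂),
      P.map (unitTrans m arm em ρ φ).op (s z₁) = s z₂ }

/-- The canonical comparison map from `P(M)` to the limit of `P(η(−))` over the category of
elements of the arity `m[M]`, with legs induced by the inert morphisms `η(C') ⟶ M`. -/
def segalMap (P : (Theta m arm)ᵒᵖ ⥤ Type) (M : posm.Elements) :
    P.obj (op (toTheta m arm M)) → segalFamilies m arm em ρ P M :=
  fun x =>
    ⟨fun z => P.map (inert m arm em ρ M z.2).op x, by
      intro z₁ z₂ φ
      show P.map (unitTrans m arm em ρ φ).op (P.map (inert m arm em ρ M z₁.2).op x)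
        = P.map (inert m arm em ρ M z₂.2).op x
      rw [← unitTrans_comp_inert m arm em ρ φ, op_comp, FunctorToTypes.map_comp_apply]⟩

def freeHom {M₁ M₂ : posm.Elements} (k : arm.obj (op M₁) ⟶ arm.obj (op M₂)) :
    toTheta m arm M₁ ⟶ toTheta m arm M₂ :=
  InducedCategory.homMk (m.free.map k)

def kleisliHom {M₁ M₂ : posm.Elements} (k : arm.obj (op M₁) ⟶ m.obj (arm.obj (op M₂))) :
    toTheta m arm M₁ ⟶ toTheta m arm M₂ :=
  InducedCategory.homMk (m.liftFree (m.free.obj _) k)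

lemma freeHom_id (M : posm.Elements) : freeHom m arm (𝟙 (arm.obj (op M))) = 𝟙 _ :=
  InducedCategory.hom_ext (m.free.map_id _)

lemma freeHom_comp_freeHom {M₁ M₂ M₃ : posm.Elements}
    (j : arm.obj (op M₁) ⟶ arm.obj (op M₂)) (k : arm.obj (op M₂) ⟶ arm.obj (op M₃)) :
    freeHom m arm j ≫ freeHom m arm k = freeHom m arm (j ≫ k) :=
  InducedCategory.hom_ext (m.free.map_comp j k).symm

lemma freeHom_comp_kleisliHom {M₁ M₂ M₃ : posm.Elements}
    (j : arm.obj (op M₁) ⟶ arm.obj (op M₂))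
    (k : arm.obj (op M₂) ⟶ m.obj (arm.obj (op M₃))) :
    freeHom m arm j ≫ kleisliHom m arm k = kleisliHom m arm (j ≫ k) :=
  InducedCategory.hom_ext (Monad.free_map_comp_liftFree (m.free.obj (arm.obj (op M₃))) j k)

lemma kleisliHom_comp_kleisliHom {M₁ M₂ M₃ : posm.Elements}
    (k : arm.obj (op M₁) ⟶ m.obj (arm.obj (op M₂)))
    (k' : arm.obj (op M₂) ⟶ m.obj (arm.obj (op M₃))) :
    kleisliHom m arm k ≫ kleisliHom m arm k' = kleisliHom m arm (k ≫ m.map k' ≫ m.μ.app _) :=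
  InducedCategory.hom_ext (Monad.liftFree_comp (Y := m.free.obj (arm.obj (op M₂))) k _)

lemma kleisliHom_comp_freeHom {M₁ M₂ M₃ : posm.Elements}
    (k : arm.obj (op M₁) ⟶ m.obj (arm.obj (op M₂)))
    (j : arm.obj (op M₂) ⟶ arm.obj (op M₃)) :
    kleisliHom m arm k ≫ freeHom m arm j = kleisliHom m arm (k ≫ m.map j) :=
  InducedCategory.hom_ext (Monad.liftFree_comp (Y := m.free.obj (arm.obj (op M₂))) k _)

lemma kleisliHom_eta (M : posm.Elements) :
    kleisliHom m arm (m.η.app (arm.obj (op M))) = 𝟙 (toTheta m arm M) :=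
  InducedCategory.hom_ext (Monad.liftFree_eta _)

lemma kleisliHom_eta_comp {M₁ M₂ : posm.Elements}
    (u : toTheta m arm M₁ ⟶ toTheta m arm M₂) :
    kleisliHom m arm (m.η.app _ ≫ u.hom.f) = u :=
  InducedCategory.hom_ext (Monad.liftFree_eta_comp_f u.hom)

def homOfElem (M : posm.Elements) {C : c} (e : (m.obj (arm.obj (op M))).obj C) :
    unitObj m arm em C ⟶ toTheta m arm M :=
  kleisliHom m arm ((ρ C).hom ≫ coyonedaEquiv.symm e)

def unitFunctor : cᵒᵖ ⥤ Theta m arm where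
  obj C := unitObj m arm em C.unop
  map f := freeHom m arm ((ρ _).hom ≫ coyoneda.map f ≫ (ρ _).inv)
  map_id C := by
    simp only [CategoryTheory.Functor.map_id, Category.id_comp, Iso.hom_inv_id]
    exact freeHom_id m arm _
  map_comp f g := by
    refine Eq.trans ?_ (freeHom_comp_freeHom m arm _ _).symm
    congr 1
    simp

abbrev unitRestriction (P : (Theta m arm)ᵒᵖ ⥤ Type) : c ⥤ Type :=
  (unitFunctor m arm em ρ).rightOp ⋙ P

lemma unitFunctor_map_comp_inert (M : posm.Elements) {C₁ C₂ : c} (f : C₁ ⟶ C₂)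
    (z : (arm.obj (op M)).obj C₁) :
    (unitFunctor m arm em ρ).map f.op ≫ inert m arm em ρ M z
      = inert m arm em ρ M ((arm.obj (op M)).map f z) :=
  unitTrans_comp_inert m arm em ρ (elHom _ f z)

lemma inert_unitObj {C C' : c}
    (z : (arm.obj (op (posm.elementsMk C (unitOp m arm em C)))).obj C') :
    inert m arm em ρ _ z = (unitFunctor m arm em ρ).map ((ρ C).hom.app C' z).op :=
  congrArg (freeHom m arm) (whisker_eq _ (coyonedaEquiv_symm_eq_of_iso (ρ C) z))

lemma inert_comp_freeHom {M₁ M₂ : posm.Elements} {C : c} (z : (arm.obj (op M₁)).obj C)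
    (k : arm.obj (op M₁) ⟶ arm.obj (op M₂)) :
    inert m arm em ρ M₁ z ≫ freeHom m arm k = inert m arm em ρ M₂ (k.app C z) :=
  (freeHom_comp_freeHom m arm _ k).trans
    (congrArg (freeHom m arm)
      ((Category.assoc _ _ _).trans (whisker_eq _ (coyonedaEquiv_symm_comp z k))))

lemma inert_comp_kleisliHom {M₁ M₂ : posm.Elements} {C : c} (z : (arm.obj (op M₁)).obj C)
    (k : arm.obj (op M₁) ⟶ m.obj (arm.obj (op M₂))) :
    inert m arm em ρ M₁ z ≫ kleisliHom m arm k = homOfElem m arm em ρ M₂ (k.app C z) :=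
  (freeHom_comp_kleisliHom m arm _ k).trans
    (congrArg (kleisliHom m arm)
      ((Category.assoc _ _ _).trans (whisker_eq _ (coyonedaEquiv_symm_comp z k))))

lemma homOfElem_comp_freeHom {M₁ M₂ : posm.Elements} {C : c}
    (e : (m.obj (arm.obj (op M₁))).obj C) (k : arm.obj (op M₁) ⟶ arm.obj (op M₂)) :
    homOfElem m arm em ρ M₁ e ≫ freeHom m arm k
      = homOfElem m arm em ρ M₂ ((m.map k).app C e) :=
  (kleisliHom_comp_freeHom m arm _ k).trans
    (congrArg (kleisliHom m arm) (by rw [Category.assoc, coyonedaEquiv_symm_comp]))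

lemma homOfElem_comp_kleisliHom {M₁ M₂ : posm.Elements} {C : c}
    (e : (m.obj (arm.obj (op M₁))).obj C) (k : arm.obj (op M₁) ⟶ m.obj (arm.obj (op M₂))) :
    homOfElem m arm em ρ M₁ e ≫ kleisliHom m arm k
      = homOfElem m arm em ρ M₂ ((m.μ.app _).app C ((m.map k).app C e)) :=
  (kleisliHom_comp_kleisliHom m arm _ k).trans
    (congrArg (kleisliHom m arm) (by
      rw [Category.assoc, ← Category.assoc _ (m.map k), coyonedaEquiv_symm_comp,
        coyonedaEquiv_symm_comp]))

lemma unitFunctor_map_comp_homOfElem (M : posm.Elements) {C₁ C₂ : c} (f : C₁ ⟶ C₂)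
    (e : (m.obj (arm.obj (op M))).obj C₁) :
    (unitFunctor m arm em ρ).map f.op ≫ homOfElem m arm em ρ M e
      = homOfElem m arm em ρ M ((m.obj (arm.obj (op M))).map f e) :=
  (freeHom_comp_kleisliHom m arm _ _).trans
    (congrArg (kleisliHom m arm) (by
      rw [Category.assoc, Category.assoc, Iso.inv_hom_id_assoc, coyonedaEquiv_symm_map]))

lemma homOfElem_eta_unit (C : c) :
    homOfElem m arm em ρ _ ((m.η.app _).app C ((ρ C).inv.app C (𝟙 C)))
      = 𝟙 (unitObj m arm em C) :=
  (congrArg (kleisliHom m arm) (by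
    rw [← coyonedaEquiv_symm_comp, coyonedaEquiv_symm_eq_of_iso (ρ C)]
    simp)).trans (kleisliHom_eta m arm _)

def segalHom (P : (Theta m arm)ᵒᵖ ⥤ Type) (M : posm.Elements)
    (q : P.obj (op (toTheta m arm M))) : arm.obj (op M) ⟶ unitRestriction m arm em ρ P where
  app C := TypeCat.ofHom fun z => P.map (inert m arm em ρ M z).op q
  naturality C₁ C₂ f := by
    ext z
    exact (congrArg (fun u => P.map u.op q)
      (unitFunctor_map_comp_inert m arm em ρ M f z).symm).trans (Functor.map_comp_apply P _ _ q)

def segalFamiliesEquiv (P : (Theta m arm)ᵒᵖ ⥤ Type) (M : posm.Elements) :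
    segalFamilies m arm em ρ P M ≃ (arm.obj (op M) ⟶ unitRestriction m arm em ρ P) where
  toFun s :=
    { app C := TypeCat.ofHom fun z => s.1 ⟨C, z⟩
      naturality C₁ C₂ f := by
        ext z
        exact (s.2 (elHom _ f z)).symm }
  invFun t := ⟨fun z => t.app z.1 z.2, fun {z₁ z₂} φ => by
    show P.map _ (t.app z₁.1 z₁.2) = t.app z₂.1 z₂.2
    rw [← φ.2]
    exact (NatTrans.naturality_apply t φ.val z₁.2).symm⟩
  left_inv s := rfl
  right_inv t := rfl

lemma bijective_segalMap_iff (P : (Theta m arm)ᵒᵖ ⥤ Type) (M : posm.Elements) :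
    Function.Bijective (segalMap m arm em ρ P M)
      ↔ Function.Bijective (segalHom m arm em ρ P M) :=
  (Equiv.comp_bijective _ (segalFamiliesEquiv m arm em ρ P M)).symm

lemma segalHom_naturality {P Q : (Theta m arm)ᵒᵖ ⥤ Type} (α : P ⟶ Q) (M : posm.Elements)
    (q : P.obj (op (toTheta m arm M))) :
    segalHom m arm em ρ Q M (α.app _ q)
      = segalHom m arm em ρ P M q ≫ Functor.whiskerLeft _ α := by
  ext C z
  exact (NatTrans.naturality_apply α _ q).symm

lemma bijective_segalHom_of_iso {P Q : (Theta m arm)ᵒᵖ ⥤ Type} (i : P ≅ Q)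
    (M : posm.Elements)
    (hQ : Function.Bijective (segalHom m arm em ρ Q M)) :
    Function.Bijective (segalHom m arm em ρ P M) := by
  have h : segalHom m arm em ρ P M = (Functor.isoWhiskerLeft _ i).symm.homToEquiv ∘
      segalHom m arm em ρ Q M ∘ (i.app _).toEquiv := by
    funext q
    show _ = segalHom m arm em ρ Q M (i.hom.app _ q) ≫ Functor.whiskerLeft _ i.inv
    rw [segalHom_naturality, Category.assoc, ← Functor.whiskerLeft_comp, i.hom_inv_id,
      Functor.whiskerLeft_id', Category.comp_id]
  rw [h]
  exact (Equiv.bijective _).comp (hQ.comp (Equiv.bijective _))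

section Nerve

variable (Y : m.Algebra)

def nerveUnitRestrictionIso :
    unitRestriction m arm em ρ ((nerveFunctor m arm).obj Y) ≅ Y.A :=
  NatIso.ofComponents
    (fun C => Equiv.toIso
      ((Monad.liftFreeEquiv Y _).symm.trans ((ρ C).homFromEquiv.trans coyonedaEquiv)))
    (by
      intro C₁ C₂ f
      ext v
      change m.free.obj (arm.obj (op (posm.elementsMk C₁ (unitOp m arm em C₁)))) ⟶ Y at v
      show coyonedaEquiv ((ρ C₂).inv ≫ m.η.app _ ≫
          (m.free.map ((ρ C₂).hom ≫ coyoneda.map f.op ≫ (ρ C₁).inv) ≫ v).f)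
        = Y.A.map f (coyonedaEquiv ((ρ C₁).inv ≫ m.η.app _ ≫ v.f))
      erw [Monad.eta_comp_free_map_comp_f, coyonedaEquiv_naturality, Category.assoc,
        Iso.inv_hom_id_assoc, Category.assoc])

lemma segalHom_nerve_comp_hom (M : posm.Elements) (u : m.free.obj (arm.obj (op M)) ⟶ Y) :
    segalHom m arm em ρ ((nerveFunctor m arm).obj Y) M u
        ≫ (nerveUnitRestrictionIso m arm em ρ Y).hom
      = m.η.app _ ≫ u.f := by
  ext C z
  show coyonedaEquiv ((ρ C).inv ≫ m.η.app _ ≫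
      (m.free.map ((ρ C).hom ≫ coyonedaEquiv.symm z) ≫ u).f) = (m.η.app _ ≫ u.f).app C z
  erw [Monad.eta_comp_free_map_comp_f, Category.assoc, Iso.inv_hom_id_assoc, coyonedaEquiv_comp,
    Equiv.apply_symm_apply]

lemma bijective_segalHom_nerve (M : posm.Elements) :
    Function.Bijective (segalHom m arm em ρ ((nerveFunctor m arm).obj Y) M) := by
  have h : segalHom m arm em ρ ((nerveFunctor m arm).obj Y) M
      = (nerveUnitRestrictionIso m arm em ρ Y).symm.homToEquiv
          ∘ (Monad.liftFreeEquiv Y _).symm := by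
    funext u
    exact (Iso.eq_comp_inv _).2 (segalHom_nerve_comp_hom m arm em ρ Y M u)
  rw [h]
  exact (Equiv.bijective _).comp (Equiv.bijective _)

end Nerve

def familialEquiv (X : c ⥤ Type) (C : c) :
    (Σ I : posm.obj C, arm.obj (op (posm.elementsMk C I)) ⟶ X) ≃ (m.obj X).obj C :=
  ((em.app X).app C).toEquiv

lemma map_familialEquiv {X X' : c ⥤ Type} (g : X ⟶ X') {C : c}
    (s : Σ I : posm.obj C, arm.obj (op (posm.elementsMk C I)) ⟶ X) :
    (m.map g).app C (familialEquiv m arm em X C s)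
      = familialEquiv m arm em X' C ⟨s.1, s.2 ≫ g⟩ :=
  (types_congr_hom (NatTrans.congr_app (em.hom.naturality g) C) s).symm

def generic {C : c} (I : posm.obj C) : (m.obj (arm.obj (op (posm.elementsMk C I)))).obj C :=
  familialEquiv m arm em _ C ⟨I, 𝟙 _⟩

lemma familialEquiv_eq_map_generic {X : c ⥤ Type} {C : c}
    (s : Σ I : posm.obj C, arm.obj (op (posm.elementsMk C I)) ⟶ X) :
    familialEquiv m arm em X C s = (m.map s.2).app C (generic m arm em s.1) := by
  rw [generic, map_familialEquiv, Category.id_comp]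

lemma exists_map_map_eq (em : famApply posm arm ≅ (m : (c ⥤ Type) ⥤ c ⥤ Type))
    (hμ : ∀ {X Y : c ⥤ Type} (f : X ⟶ Y),
      IsPullback (m.map (m.map f)) (m.μ.app X) (m.μ.app Y) (m.map f))
    {X : c ⥤ Type} {C : c} (y : (m.obj (m.obj X)).obj C) :
    ∃ (M : posm.Elements) (g : arm.obj (op M) ⟶ X)
      (w : (m.obj (m.obj (arm.obj (op M)))).obj C), (m.map (m.map g)).app C w = y := by
  obtain ⟨s, hs⟩ := (familialEquiv m arm em X C).surjective ((m.μ.app X).app C y)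
  rw [familialEquiv_eq_map_generic] at hs
  obtain ⟨w, hw, -⟩ := Types.exists_of_isPullback
    ((hμ s.2).map ((evaluation c Type).obj C)) y (generic m arm em s.1) hs.symm
  exact ⟨_, s.2, w, hw⟩

section SegalAlgebra

variable (P : (Theta m arm)ᵒᵖ ⥤ Type)
  (hP : ∀ M, Function.Bijective (segalHom m arm em ρ P M))
  (hμ : ∀ {X Y : c ⥤ Type} (f : X ⟶ Y),
    IsPullback (m.map (m.map f)) (m.μ.app X) (m.μ.app Y) (m.map f))

lemma segalHom_map_freeHom {M₁ M₂ : posm.Elements} (k : arm.obj (op M₁) ⟶ arm.obj (op M₂))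
    (q : P.obj (op (toTheta m arm M₂))) :
    segalHom m arm em ρ P M₁ (P.map (freeHom m arm k).op q)
      = k ≫ segalHom m arm em ρ P M₂ q := by
  ext C z
  exact (Functor.map_comp_apply P _ _ q).symm.trans
    (congrArg (fun u => P.map (Quiver.Hom.op u) q) (inert_comp_freeHom m arm em ρ z k))

lemma segalHom_unitObj {C : c} (x : P.obj (op (unitObj m arm em C))) :
    segalHom m arm em ρ P _ x = (ρ C).hom ≫ coyonedaEquiv.symm x := by
  ext C' z
  exact congrArg (fun u => P.map (Quiver.Hom.op u) x) (inert_unitObj m arm em ρ z)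

noncomputable def segalEquiv (M : posm.Elements) :
    P.obj (op (toTheta m arm M)) ≃ (arm.obj (op M) ⟶ unitRestriction m arm em ρ P) :=
  Equiv.ofBijective _ (hP M)

lemma segalEquiv_apply {M : posm.Elements} (q : P.obj (op (toTheta m arm M))) :
    segalEquiv m arm em ρ P hP M q = segalHom m arm em ρ P M q :=
  rfl

lemma segalEquiv_symm_comp {M₁ M₂ : posm.Elements} (k : arm.obj (op M₁) ⟶ arm.obj (op M₂))
    (g : arm.obj (op M₂) ⟶ unitRestriction m arm em ρ P) :
    (segalEquiv m arm em ρ P hP M₁).symm (k ≫ g)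
      = P.map (freeHom m arm k).op ((segalEquiv m arm em ρ P hP M₂).symm g) := by
  rw [Equiv.symm_apply_eq, segalEquiv_apply, segalHom_map_freeHom,
    ← segalEquiv_apply _ _ _ _ _ hP, Equiv.apply_symm_apply]

noncomputable def segalAction (C : c) (y : (m.obj (unitRestriction m arm em ρ P)).obj C) :
    (unitRestriction m arm em ρ P).obj C :=
  let s := (familialEquiv m arm em _ C).symm y
  P.map (homOfElem m arm em ρ _ (generic m arm em s.1)).op
    ((segalEquiv m arm em ρ P hP _).symm s.2)

lemma segalAction_map {M : posm.Elements} (g : arm.obj (op M) ⟶ unitRestriction m arm em ρ P)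
    {C : c} (e : (m.obj (arm.obj (op M))).obj C) :
    segalAction m arm em ρ P hP C ((m.map g).app C e)
      = P.map (homOfElem m arm em ρ M e).op ((segalEquiv m arm em ρ P hP M).symm g) := by
  obtain ⟨s, rfl⟩ := (familialEquiv m arm em _ C).surjective e
  rw [map_familialEquiv, segalAction, Equiv.symm_apply_apply]
  dsimp only
  rw [segalEquiv_symm_comp, ← Functor.map_comp_apply, ← op_comp, homOfElem_comp_freeHom,
    ← familialEquiv_eq_map_generic]

noncomputable def segalStructure :
    m.obj (unitRestriction m arm em ρ P) ⟶ unitRestriction m arm em ρ P where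
  app C := TypeCat.ofHom (segalAction m arm em ρ P hP C)
  naturality C₁ C₂ f := by
    ext y
    obtain ⟨s, rfl⟩ := (familialEquiv m arm em _ C₁).surjective y
    show segalAction m arm em ρ P hP C₂ ((m.obj _).map f (familialEquiv m arm em _ C₁ s))
      = (unitRestriction m arm em ρ P).map f
          (segalAction m arm em ρ P hP C₁ (familialEquiv m arm em _ C₁ s))
    rw [familialEquiv_eq_map_generic, ← NatTrans.naturality_apply (m.map s.2) f,
      segalAction_map, segalAction_map]
    exact (congrArg (fun u => P.map (Quiver.Hom.op u) _)
      (unitFunctor_map_comp_homOfElem m arm em ρ _ f _).symm).trans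
        (Functor.map_comp_apply P _ _ _)

lemma segalStructure_app_map {M : posm.Elements}
    (g : arm.obj (op M) ⟶ unitRestriction m arm em ρ P) {C : c}
    (e : (m.obj (arm.obj (op M))).obj C) :
    (segalStructure m arm em ρ P hP).app C ((m.map g).app C e)
      = P.map (homOfElem m arm em ρ M e).op ((segalEquiv m arm em ρ P hP M).symm g) :=
  segalAction_map m arm em ρ P hP g e

lemma segalStructure_unit : m.η.app _ ≫ segalStructure m arm em ρ P hP = 𝟙 _ := by
  ext C x
  have hx : (m.η.app _).app C x = (m.map ((ρ C).hom ≫ coyonedaEquiv.symm x)).app C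
      ((m.η.app _).app C ((ρ C).inv.app C (𝟙 C))) := by
    have hgx : ((ρ C).hom ≫ coyonedaEquiv.symm x).app C ((ρ C).inv.app C (𝟙 C)) = x := by
      simp
    exact (congrArg _ hgx).symm.trans (types_congr_hom
      (NatTrans.congr_app (m.η.naturality ((ρ C).hom ≫ coyonedaEquiv.symm x)) C) _)
  have hsx : (segalEquiv m arm em ρ P hP _).symm ((ρ C).hom ≫ coyonedaEquiv.symm x) = x :=
    (Equiv.symm_apply_eq _).2 (segalHom_unitObj m arm em ρ P x).symm
  show segalAction m arm em ρ P hP C ((m.η.app _).app C x) = x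
  rw [hx, segalAction_map, hsx]
  erw [homOfElem_eta_unit, op_id, Functor.map_id_apply]

lemma segalHom_map_kleisliHom {M₁ M₂ : posm.Elements}
    (k : arm.obj (op M₁) ⟶ m.obj (arm.obj (op M₂))) (q : P.obj (op (toTheta m arm M₂))) :
    segalHom m arm em ρ P M₁ (P.map (kleisliHom m arm k).op q)
      = k ≫ m.map (segalHom m arm em ρ P M₂ q) ≫ segalStructure m arm em ρ P hP := by
  ext C z
  show P.map (inert m arm em ρ M₁ z).op (P.map (kleisliHom m arm k).op q)
    = (segalStructure m arm em ρ P hP).app C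
        ((m.map (segalHom m arm em ρ P M₂ q)).app C (k.app C z))
  rw [segalStructure_app_map, ← segalEquiv_apply _ _ _ _ _ hP, Equiv.symm_apply_apply,
    ← Functor.map_comp_apply, ← op_comp, inert_comp_kleisliHom]

lemma segalEquiv_symm_kleisliHom {M₁ M₂ : posm.Elements}
    (k : arm.obj (op M₁) ⟶ m.obj (arm.obj (op M₂)))
    (g : arm.obj (op M₂) ⟶ unitRestriction m arm em ρ P) :
    (segalEquiv m arm em ρ P hP M₁).symm (k ≫ m.map g ≫ segalStructure m arm em ρ P hP)
      = P.map (kleisliHom m arm k).op ((segalEquiv m arm em ρ P hP M₂).symm g) := by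
  rw [Equiv.symm_apply_eq, segalEquiv_apply, segalHom_map_kleisliHom,
    ← segalEquiv_apply _ _ _ _ _ hP, Equiv.apply_symm_apply]

lemma segalStructure_assoc_map_map {M : posm.Elements}
    (g : arm.obj (op M) ⟶ unitRestriction m arm em ρ P) {C : c}
    (w : (m.obj (m.obj (arm.obj (op M)))).obj C) :
    (m.μ.app _ ≫ segalStructure m arm em ρ P hP).app C ((m.map (m.map g)).app C w)
      = (m.map (segalStructure m arm em ρ P hP) ≫ segalStructure m arm em ρ P hP).app C
          ((m.map (m.map g)).app C w) := by
  obtain ⟨⟨I, k⟩, rfl⟩ := (familialEquiv m arm em _ C).surjective w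
  rw [familialEquiv_eq_map_generic]
  set a := segalStructure m arm em ρ P hP
  set e := (m.map k).app C (generic m arm em I)
  have hL : (m.μ.app _ ≫ a).app C ((m.map (m.map g)).app C e)
      = a.app C ((m.map g).app C ((m.μ.app _).app C e)) :=
    congrArg (a.app C) (types_congr_hom (NatTrans.congr_app (m.μ.naturality g) C) e)
  have hR : (m.map a ≫ a).app C ((m.map (m.map g)).app C e)
      = a.app C ((m.map (k ≫ m.map g ≫ a)).app C (generic m arm em I)) := by
    simp [e]
  rw [hL, hR, segalStructure_app_map, segalStructure_app_map, segalEquiv_symm_kleisliHom,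
    ← Functor.map_comp_apply, ← op_comp, homOfElem_comp_kleisliHom]

noncomputable def segalAlgebra : m.Algebra where
  A := unitRestriction m arm em ρ P
  a := segalStructure m arm em ρ P hP
  unit := segalStructure_unit m arm em ρ P hP
  assoc := by
    ext C y
    obtain ⟨M, g, w, rfl⟩ := exists_map_map_eq m arm em hμ y
    exact segalStructure_assoc_map_map m arm em ρ P hP g w

lemma liftFree_segalHom_map_kleisliHom {M₁ M₂ : posm.Elements}
    (k : arm.obj (op M₁) ⟶ m.obj (arm.obj (op M₂))) (q : P.obj (op (toTheta m arm M₂))) :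
    m.liftFree (segalAlgebra m arm em ρ P hP hμ)
        (segalHom m arm em ρ P M₁ (P.map (kleisliHom m arm k).op q))
      = (kleisliHom m arm k).hom ≫
          m.liftFree (segalAlgebra m arm em ρ P hP hμ) (segalHom m arm em ρ P M₂ q) := by
  rw [segalHom_map_kleisliHom _ _ _ _ _ hP]
  exact (Monad.liftFree_comp (Y := m.free.obj (arm.obj (op M₂))) k
    (m.liftFree (segalAlgebra m arm em ρ P hP hμ) (segalHom m arm em ρ P M₂ q))).symm

noncomputable def isoNerveSegalAlgebra :
    P ≅ (nerveFunctor m arm).obj (segalAlgebra m arm em ρ P hP hμ) :=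
  NatIso.ofComponents
    (fun N => Equiv.toIso ((segalEquiv m arm em ρ P hP N.unop).trans
      (Monad.liftFreeEquiv (segalAlgebra m arm em ρ P hP hμ) _)))
    (by
      intro N₁ N₂ u
      obtain ⟨k, hk⟩ : ∃ k, kleisliHom m arm k = u.unop :=
        ⟨_, kleisliHom_eta_comp m arm u.unop⟩
      rw [← Quiver.Hom.op_unop u, ← hk]
      ext q
      exact liftFree_segalHom_map_kleisliHom m arm em ρ P hP hμ k q)

end SegalAlgebra

theorem nerve_iff_segal
    (hMultCartesian : ∀ {X Y : c ⥤ Type} (f : X ⟶ Y),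
      IsPullback ((m : (c ⥤ Type) ⥤ c ⥤ Type).map ((m : (c ⥤ Type) ⥤ c ⥤ Type).map f))
        (m.μ.app X) (m.μ.app Y) ((m : (c ⥤ Type) ⥤ c ⥤ Type).map f))
    (P : (Theta m arm)ᵒᵖ ⥤ Type) :
    (∃ X : m.Algebra, Nonempty (P ≅ (nerveFunctor m arm).obj X)) ↔
      ∀ M : posm.Elements, Function.Bijective (segalMap m arm em ρ P M) := by
  simp only [bijective_segalMap_iff]
  constructor
  · rintro ⟨X, ⟨i⟩⟩ M
    exact bijective_segalHom_of_iso m arm em ρ i M (bijective_segalHom_nerve m arm em ρ X M)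
  · intro hP
    exact ⟨_, ⟨isoNerveSegalAlgebra m arm em ρ P hP hMultCartesian⟩⟩

end Statement6

end Fam
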